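/- arXiv:2107.01950 — 2 statements merged into one kernel-verified Lean document; each statement's English description precedes it below -/
import Mathlib

section
/- Let B be a commutative ring and let F be a functor from commutative B-algebras to sets that preserves filtered colimits (i.e. F is locally of finite presentation). Let B_∞ = colim_{λ∈Λ} B_λ be a filtered colimit of commutative B-algebras. Then the natural map colim_{λ∈Λ} (F(B_λ)/R) → F(B_∞)/R is bijective. -/
/-!
Polynomials over `B_∞`, and the conditions `P(0), P(1) ∈ B_∞^×`, descend to a finite stage, so
`C ↦ C[t]_Σ` commutes with filtered colimits. As `F` preserves them, `F(B_∞[t]_Σ)` is the colimit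
of the `F(B_λ[t]_Σ)`: a direct R-equivalence over `B_∞` comes from a point over some `B_λ[t]_Σ`,
whose two evaluations agree with the given points at a later stage. A chain of direct
R-equivalences has finitely many links, which descend one at a time to a common stage.
-/

noncomputable section

open Polynomial

/-- The multiplicative subset `Σ` of `B[t]` consisting of the polynomials whose values
at `t = 0` and `t = 1` are units of `B`. -/
def RSigma (B : Type*) [CommRing B] : Submonoid (Polynomial B) where
  carrier := {P | IsUnit (P.eval 0) ∧ IsUnit (P.eval 1)}
  mul_mem' := fun ha hb =>
    ⟨by rw [eval_mul]; exact ha.1.mul hb.1, by rw [eval_mul]; exact ha.2.mul hb.2⟩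
  one_mem' := ⟨by simp, by simp⟩

theorem mem_RSigma {B : Type*} [CommRing B] {P : Polynomial B} :
    P ∈ RSigma B ↔ IsUnit (P.eval 0) ∧ IsUnit (P.eval 1) := Iff.rfl

/-- The localization `B[t]_Σ` of `B[t]` at `Σ`. -/
abbrev RLoc (B : Type*) [CommRing B] := Localization (RSigma B)

/-- Evaluation at `t = 0`, extended to `B[t]_Σ`, as a `B`-algebra homomorphism. -/
def ev0 (B : Type*) [CommRing B] : RLoc B →ₐ[B] B :=
  IsLocalization.liftAlgHom (M := RSigma B) (f := Polynomial.aeval (0 : B))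
    (fun y => by simpa using (mem_RSigma.mp y.2).1)

/-- Evaluation at `t = 1`, extended to `B[t]_Σ`, as a `B`-algebra homomorphism. -/
def ev1 (B : Type*) [CommRing B] : RLoc B →ₐ[B] B :=
  IsLocalization.liftAlgHom (M := RSigma B) (f := Polynomial.aeval (1 : B))
    (fun y => by simpa using (mem_RSigma.mp y.2).2)

universe u

variable (B : Type u) [CommRing B]

/-- A functor from the category of commutative `B`-algebras (in the universe `u`)
to the category of sets. -/
structure SetValuedFunctor (B : Type u) [CommRing B] where
  obj : (C : Type u) → [CommRing C] → [Algebra B C] → Type u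
  map : {C D : Type u} → [CommRing C] → [Algebra B C] → [CommRing D] → [Algebra B D] →
    (C →ₐ[B] D) → obj C → obj D
  map_id : ∀ (C : Type u) [CommRing C] [Algebra B C], map (AlgHom.id B C) = id
  map_comp : ∀ {C D E : Type u} [CommRing C] [Algebra B C] [CommRing D] [Algebra B D]
    [CommRing E] [Algebra B E] (f : C →ₐ[B] D) (g : D →ₐ[B] E),
    map (g.comp f) = map g ∘ map f

/-- Evaluation at `t = 0` on `C[t]_{Σ_C}`, as a homomorphism of `B`-algebras. -/
def ev0R (C : Type u) [CommRing C] [Algebra B C] : RLoc C →ₐ[B] C :=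
  IsLocalization.liftAlgHom (M := RSigma C)
    (f := (Polynomial.aeval (0 : C)).restrictScalars B)
    (fun y => by simpa using (mem_RSigma.mp y.2).1)

/-- Evaluation at `t = 1` on `C[t]_{Σ_C}`, as a homomorphism of `B`-algebras. -/
def ev1R (C : Type u) [CommRing C] [Algebra B C] : RLoc C →ₐ[B] C :=
  IsLocalization.liftAlgHom (M := RSigma C)
    (f := (Polynomial.aeval (1 : C)).restrictScalars B)
    (fun y => by simpa using (mem_RSigma.mp y.2).2)

/-- Two points `x₀ x₁ ∈ F(C)` are directly R-equivalent if they are the two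
evaluations of a point of `F(C[t]_Σ)`. -/
def DirectR (F : SetValuedFunctor B) (C : Type u) [CommRing C] [Algebra B C]
    (x₀ x₁ : F.obj C) : Prop :=
  ∃ x : F.obj (RLoc C), F.map (ev0R B C) x = x₀ ∧ F.map (ev1R B C) x = x₁

/-- R-equivalence: the equivalence relation generated by direct R-equivalence. -/
def REquiv (F : SetValuedFunctor B) (C : Type u) [CommRing C] [Algebra B C]
    (x₀ x₁ : F.obj C) : Prop :=
  Relation.EqvGen (DirectR B F C) x₀ x₁

variable {B}

theorem Relation.EqvGen.map {α β : Type*} {r : α → α → Prop} {s : β → β → Prop} (φ : α → β)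
    (h : ∀ a b, r a b → s (φ a) (φ b)) {a b : α} (hab : Relation.EqvGen r a b) :
    Relation.EqvGen s (φ a) (φ b) := by
  induction hab with
  | rel a b hab => exact .rel _ _ (h a b hab)
  | refl a => exact .refl _
  | symm a b _ ih => exact .symm _ _ ih
  | trans a b c _ _ ih₁ ih₂ => exact .trans _ _ _ ih₁ ih₂

structure IsDirectedColimit {ι : Type*} [Preorder ι] {X : ι → Type*} {Y : Type*}
    (φ : ∀ i j, i ≤ j → X i → X j) (ψ : ∀ i, X i → Y) : Prop where
  map_map : ∀ i j k (hij : i ≤ j) (hjk : j ≤ k) x,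
    φ j k hjk (φ i j hij x) = φ i k (hij.trans hjk) x
  map_comp : ∀ i j (hij : i ≤ j) x, ψ j (φ i j hij x) = ψ i x
  exists_eq : ∀ y, ∃ i x, ψ i x = y
  exists_map_eq : ∀ i j x x', ψ i x = ψ j x' →
    ∃ (k : ι) (hik : i ≤ k) (hjk : j ≤ k), φ i k hik x = φ j k hjk x'

namespace IsDirectedColimit

variable {ι : Type*} [Preorder ι] [IsDirected ι (· ≤ ·)] {X : ι → Type*} {Y : Type*}
  {φ : ∀ i j, i ≤ j → X i → X j} {ψ : ∀ i, X i → Y}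

theorem of_exists_map_eq_self
    (map_map : ∀ i j k (hij : i ≤ j) (hjk : j ≤ k) x,
      φ j k hjk (φ i j hij x) = φ i k (hij.trans hjk) x)
    (map_comp : ∀ i j (hij : i ≤ j) x, ψ j (φ i j hij x) = ψ i x)
    (exists_eq : ∀ y, ∃ i x, ψ i x = y)
    (exists_map_eq_self : ∀ i x x', ψ i x = ψ i x' → ∃ (k : ι) (hik : i ≤ k),
      φ i k hik x = φ i k hik x') :
    IsDirectedColimit φ ψ where
  map_map := map_map
  map_comp := map_comp
  exists_eq := exists_eq
  exists_map_eq i j x x' h := by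
    obtain ⟨k, hik, hjk⟩ := directed_of (· ≤ ·) i j
    obtain ⟨l, hkl, hl⟩ := exists_map_eq_self k (φ i k hik x) (φ j k hjk x')
      (by rw [map_comp, map_comp, h])
    refine ⟨l, hik.trans hkl, hjk.trans hkl, ?_⟩
    rwa [map_map, map_map] at hl

section

variable (hc : IsDirectedColimit φ ψ)
include hc

theorem exists_eq_of_le (i : ι) (y : Y) : ∃ (k : ι) (_ : i ≤ k) (x : X k), ψ k x = y := by
  obtain ⟨j, x, rfl⟩ := hc.exists_eq y
  obtain ⟨k, hik, hjk⟩ := directed_of (· ≤ ·) i j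
  exact ⟨k, hik, φ j k hjk x, hc.map_comp j k hjk x⟩

theorem exists_forall_map_eq {κ : Type*} (s : Finset κ) {i : ι} (x x' : κ → X i)
    (h : ∀ n ∈ s, ψ i (x n) = ψ i (x' n)) :
    ∃ (l : ι) (hil : i ≤ l), ∀ n ∈ s, φ i l hil (x n) = φ i l hil (x' n) := by
  classical
  induction s using Finset.induction_on with
  | empty => exact ⟨i, le_rfl, by simp⟩
  | insert n s _ ih =>
    obtain ⟨l₁, hil₁, H₁⟩ := ih fun m hm => h m (Finset.mem_insert_of_mem hm)
    obtain ⟨l₂, hil₂, _, H₂⟩ := hc.exists_map_eq i i _ _ (h n (Finset.mem_insert_self n s))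
    obtain ⟨l, hl₁, hl₂⟩ := directed_of (· ≤ ·) l₁ l₂
    refine ⟨l, hil₁.trans hl₁, fun m hm => ?_⟩
    rcases Finset.mem_insert.1 hm with rfl | hm
    · rw [← hc.map_map i l₂ l hil₂ hl₂, ← hc.map_map i l₂ l hil₂ hl₂, H₂]
    · rw [← hc.map_map i l₁ l hil₁ hl₁, ← hc.map_map i l₁ l hil₁ hl₁, H₁ m hm]

theorem eqvGen_lift {r : ∀ i, X i → X i → Prop} {s : Y → Y → Prop}
    (hr : ∀ i j (hij : i ≤ j) x x', r i x x' → r j (φ i j hij x) (φ i j hij x'))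
    (hs : ∀ i j x x', s (ψ i x) (ψ j x') →
      ∃ (k : ι) (hik : i ≤ k) (hjk : j ≤ k), r k (φ i k hik x) (φ j k hjk x'))
    {i j : ι} {x : X i} {x' : X j} (h : Relation.EqvGen s (ψ i x) (ψ j x')) :
    ∃ (k : ι) (hik : i ≤ k) (hjk : j ≤ k),
      Relation.EqvGen (r k) (φ i k hik x) (φ j k hjk x') := by
  suffices ∀ y y', Relation.EqvGen s y y' → ∀ i j (x : X i) (x' : X j), ψ i x = y → ψ j x' = y' →
      ∃ (k : ι) (hik : i ≤ k) (hjk : j ≤ k),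
        Relation.EqvGen (r k) (φ i k hik x) (φ j k hjk x') from this _ _ h i j x x' rfl rfl
  intro y y' h
  induction h with
  | rel y y' h =>
    rintro i j x x' rfl rfl
    obtain ⟨k, hik, hjk, H⟩ := hs i j x x' h
    exact ⟨k, hik, hjk, .rel _ _ H⟩
  | refl y =>
    rintro i j x x' rfl h
    obtain ⟨k, hik, hjk, H⟩ := hc.exists_map_eq i j x x' h.symm
    exact ⟨k, hik, hjk, H ▸ .refl _⟩
  | symm y y' _ ih =>
    intro i j x x' hx hx'
    obtain ⟨k, hjk, hik, H⟩ := ih j i x' x hx' hx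
    exact ⟨k, hik, hjk, .symm _ _ H⟩
  | trans y y' y'' _ _ ih₁ ih₂ =>
    intro i j x x' hx hx'
    obtain ⟨m, z, hz⟩ := hc.exists_eq y'
    obtain ⟨k₁, hik₁, hmk₁, H₁⟩ := ih₁ i m x z hx hz
    obtain ⟨k₂, hmk₂, hjk₂, H₂⟩ := ih₂ m j z x' hz hx'
    obtain ⟨k, hk₁, hk₂⟩ := directed_of (· ≤ ·) k₁ k₂
    refine ⟨k, hik₁.trans hk₁, hjk₂.trans hk₂, .trans _ (φ m k (hmk₁.trans hk₁) z) _ ?_ ?_⟩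
    · simpa only [hc.map_map] using H₁.map (φ k₁ k hk₁) (hr k₁ k hk₁)
    · simpa only [hc.map_map] using H₂.map (φ k₂ k hk₂) (hr k₂ k hk₂)

end

variable {A : ι → Type*}

theorem exists_isUnit_map [∀ i, CommMonoid (A i)] {M : Type*} [CommMonoid M]
    {f : ∀ i j, i ≤ j → A i →* A j} {g : ∀ i, A i →* M}
    (hc : IsDirectedColimit (fun i j h => ⇑(f i j h)) (fun i => ⇑(g i)))
    {i : ι} {a : A i} (ha : IsUnit (g i a)) :
    ∃ (k : ι) (hik : i ≤ k), IsUnit (f i k hik a) := by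
  obtain ⟨v, hv⟩ := isUnit_iff_exists_inv.mp ha
  obtain ⟨k, hik, b, rfl⟩ := hc.exists_eq_of_le i v
  have hk : g k (f i k hik a * b) = g k 1 := by
    rw [map_mul, map_one, hc.map_comp, hv]
  obtain ⟨l, hkl, hkl', hl⟩ := hc.exists_map_eq k k _ _ hk
  rw [map_one, map_mul, hc.map_map] at hl
  exact ⟨l, hik.trans hkl, isUnit_iff_exists_inv.mpr ⟨_, hl⟩⟩

theorem polynomial_map [∀ i, Semiring (A i)] {R : Type*} [Semiring R]
    {f : ∀ i j, i ≤ j → A i →+* A j} {g : ∀ i, A i →+* R}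
    (hc : IsDirectedColimit (fun i j h => ⇑(f i j h)) (fun i => ⇑(g i))) :
    IsDirectedColimit (fun i j h => Polynomial.map (f i j h)) (fun i => Polynomial.map (g i)) := by
  have map_map i j k (hij : i ≤ j) (hjk : j ≤ k) (p : (A i)[X]) :
      (p.map (f i j hij)).map (f j k hjk) = p.map (f i k (hij.trans hjk)) := by
    rw [Polynomial.map_map]
    congr 1
    ext a
    exact hc.map_map i j k hij hjk a
  have map_comp i j (hij : i ≤ j) (p : (A i)[X]) : (p.map (f i j hij)).map (g j) = p.map (g i) := by
    rw [Polynomial.map_map]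
    congr 1
    ext a
    exact hc.map_comp i j hij a
  refine of_exists_map_eq_self map_map map_comp (fun p => ?_) fun i p q hpq => ?_
  · induction p using Polynomial.induction_on' with
    | add p q hp hq =>
      obtain ⟨i, p, rfl⟩ := hp
      obtain ⟨j, q, rfl⟩ := hq
      obtain ⟨k, hik, hjk⟩ := directed_of (· ≤ ·) i j
      exact ⟨k, p.map (f i k hik) + q.map (f j k hjk), by
        rw [Polynomial.map_add, map_comp, map_comp]⟩
    | monomial n a =>
      obtain ⟨i, b, rfl⟩ := hc.exists_eq a
      exact ⟨i, Polynomial.monomial n b, Polynomial.map_monomial _⟩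
  · have hcoeff : ∀ n ∈ p.support ∪ q.support, g i (p.coeff n) = g i (q.coeff n) := by
      intro n _
      simpa only [Polynomial.coeff_map] using congrArg (Polynomial.coeff · n) hpq
    obtain ⟨k, hik, hk⟩ := hc.exists_forall_map_eq _ _ _ hcoeff
    refine ⟨k, hik, Polynomial.ext fun n => ?_⟩
    rw [Polynomial.coeff_map, Polynomial.coeff_map]
    by_cases hn : n ∈ p.support ∪ q.support
    · exact hk n hn
    · simp only [Finset.mem_union, Polynomial.mem_support_iff, not_or, not_not] at hn
      rw [hn.1, hn.2]

end IsDirectedColimit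

theorem RSigma.map_mem {C D : Type*} [CommRing C] [CommRing D] (φ : C →+* D) {Q : C[X]}
    (hQ : Q ∈ RSigma C) : Q.map φ ∈ RSigma D := by
  rw [mem_RSigma, eval_zero_map, eval_one_map]
  exact ⟨hQ.1.map φ, hQ.2.map φ⟩

namespace RLoc

variable {C D E : Type*} [CommRing C] [Algebra B C] [CommRing D] [Algebra B D]
  [CommRing E] [Algebra B E]

def map (φ : C →ₐ[B] D) : RLoc C →ₐ[B] RLoc D :=
  IsLocalization.liftAlgHom (M := RSigma C)
    (f := ((IsScalarTower.toAlgHom D D[X] (RLoc D)).restrictScalars B).comp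
      (Polynomial.mapAlgHom φ))
    fun Q => IsLocalization.map_units (M := RSigma D) _ ⟨_, RSigma.map_mem φ Q.2⟩

theorem map_algebraMap (φ : C →ₐ[B] D) (p : C[X]) :
    map φ (algebraMap C[X] (RLoc C) p) = algebraMap D[X] (RLoc D) (p.map φ) := by
  simp [map, IsLocalization.liftAlgHom, IsLocalization.lift_eq]

theorem algHom_ext {T : Type*} [CommRing T] [Algebra B T] {Φ Ψ : RLoc C →ₐ[B] T}
    (h : ∀ p : C[X], Φ (algebraMap C[X] (RLoc C) p) = Ψ (algebraMap C[X] (RLoc C) p)) :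
    Φ = Ψ :=
  AlgHom.coe_ringHom_injective <|
    IsLocalization.ringHom_ext (RSigma C) (RingHom.ext h)

theorem map_comp (φ : C →ₐ[B] D) (ψ : D →ₐ[B] E) : map (ψ.comp φ) = (map ψ).comp (map φ) :=
  algHom_ext fun p => by
    simp only [AlgHom.comp_apply, map_algebraMap, Polynomial.map_map]
    rfl

theorem map_mk' (φ : C →ₐ[B] D) (p : C[X]) (Q : RSigma C) :
    map φ (IsLocalization.mk' (RLoc C) p Q)
      = IsLocalization.mk' (RLoc D) (p.map φ)
          (⟨Q.1.map φ, RSigma.map_mem (φ : C →+* D) Q.2⟩ : RSigma D) := by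
  rw [IsLocalization.eq_mk'_iff_mul_eq, ← map_algebraMap, ← map_mul, IsLocalization.mk'_spec,
    map_algebraMap]

end RLoc

section Evaluation

variable {C D : Type u} [CommRing C] [Algebra B C] [CommRing D] [Algebra B D]

theorem ev0R_algebraMap (p : C[X]) : ev0R B C (algebraMap C[X] (RLoc C) p) = p.eval 0 := by
  simp [ev0R, IsLocalization.liftAlgHom, IsLocalization.lift_eq]

theorem ev1R_algebraMap (p : C[X]) : ev1R B C (algebraMap C[X] (RLoc C) p) = p.eval 1 := by
  simp [ev1R, IsLocalization.liftAlgHom, IsLocalization.lift_eq]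

theorem ev0R_comp_map (φ : C →ₐ[B] D) : (ev0R B D).comp (RLoc.map φ) = φ.comp (ev0R B C) :=
  RLoc.algHom_ext fun p => by
    simp only [AlgHom.comp_apply, RLoc.map_algebraMap, ev0R_algebraMap, eval_zero_map]
    rfl

theorem ev1R_comp_map (φ : C →ₐ[B] D) : (ev1R B D).comp (RLoc.map φ) = φ.comp (ev1R B C) :=
  RLoc.algHom_ext fun p => by
    simp only [AlgHom.comp_apply, RLoc.map_algebraMap, ev1R_algebraMap, eval_one_map]
    rfl

end Evaluation

namespace IsDirectedColimit

variable {ι : Type*} [Preorder ι] {A : ι → Type u}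
  [∀ i, CommRing (A i)] [∀ i, Algebra B (A i)] {R : Type u} [CommRing R] [Algebra B R]
  {f : ∀ i j, i ≤ j → A i →ₐ[B] A j} {g : ∀ i, A i →ₐ[B] R}
  (hc : IsDirectedColimit (fun i j h => ⇑(f i j h)) (fun i => ⇑(g i)))
include hc

theorem algHom_comp_map (i j k : ι) (hij : i ≤ j) (hjk : j ≤ k) :
    (f j k hjk).comp (f i j hij) = f i k (hij.trans hjk) :=
  AlgHom.ext (hc.map_map i j k hij hjk)

theorem algHom_comp (i j : ι) (hij : i ≤ j) : (g j).comp (f i j hij) = g i :=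
  AlgHom.ext (hc.map_comp i j hij)

variable [IsDirected ι (· ≤ ·)]

theorem exists_map_mem_RSigma {i : ι} {Q : (A i)[X]} (hQ : Q.map (g i) ∈ RSigma R) :
    ∃ (k : ι) (hik : i ≤ k), Q.map (f i k hik) ∈ RSigma (A k) := by
  rw [mem_RSigma, eval_zero_map, eval_one_map] at hQ
  have hu {a : A i} : IsUnit (g i a) → ∃ (k : ι) (hik : i ≤ k), IsUnit (f i k hik a) :=
    hc.exists_isUnit_map (f := fun i j h => (f i j h : A i →* A j)) (g := fun i => (g i : A i →* R))
  obtain ⟨k₀, hik₀, hk₀⟩ := hu hQ.1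
  obtain ⟨k₁, hik₁, hk₁⟩ := hu hQ.2
  obtain ⟨k, hk₀k, hk₁k⟩ := directed_of (· ≤ ·) k₀ k₁
  refine ⟨k, hik₀.trans hk₀k, ?_⟩
  rw [mem_RSigma, eval_zero_map, eval_one_map, RingHom.coe_coe, ← hc.map_map i k₀ k hik₀ hk₀k,
    ← hc.map_map i k₁ k hik₁ hk₁k]
  exact ⟨hk₀.map _, hk₁.map _⟩

theorem exists_lift_mem_RSigma (i : ι) {Q : R[X]} (hQ : Q ∈ RSigma R) :
    ∃ (k : ι) (_ : i ≤ k) (Q' : (A k)[X]), Q' ∈ RSigma (A k) ∧ Q'.map (g k) = Q := by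
  have hP := hc.polynomial_map (f := fun i j h => (f i j h : A i →+* A j))
    (g := fun i => (g i : A i →+* R))
  obtain ⟨j, hij, Q', rfl⟩ := hP.exists_eq_of_le i Q
  obtain ⟨k, hjk, hk⟩ := hc.exists_map_mem_RSigma hQ
  exact ⟨k, hij.trans hjk, _, hk, hP.map_comp j k hjk Q'⟩

theorem rLoc_map :
    IsDirectedColimit (fun i j h => ⇑(RLoc.map (f i j h))) (fun i => ⇑(RLoc.map (g i))) := by
  have hP := hc.polynomial_map (f := fun i j h => (f i j h : A i →+* A j))
    (g := fun i => (g i : A i →+* R))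
  refine of_exists_map_eq_self (fun i j k hij hjk x => ?_) (fun i j hij x => ?_) (fun z => ?_)
    fun i x x' h => ?_
  · rw [← AlgHom.comp_apply, ← RLoc.map_comp, hc.algHom_comp_map]
  · rw [← AlgHom.comp_apply, ← RLoc.map_comp, hc.algHom_comp]
  · obtain ⟨⟨p, Q, hQ⟩, rfl⟩ := IsLocalization.mk'_surjective (RSigma R) z
    obtain ⟨i, p, rfl⟩ := hP.exists_eq p
    obtain ⟨k, hik, Q', hQ', rfl⟩ := hc.exists_lift_mem_RSigma i hQ
    refine ⟨k, IsLocalization.mk' _ (p.map (f i k hik)) ⟨Q', hQ'⟩, ?_⟩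
    rw [RLoc.map_mk']
    congr 1
    exact hP.map_comp i k hik p
  · obtain ⟨⟨p₁, Q₁⟩, rfl⟩ := IsLocalization.mk'_surjective (RSigma (A i)) x
    obtain ⟨⟨p₂, Q₂⟩, rfl⟩ := IsLocalization.mk'_surjective (RSigma (A i)) x'
    rw [RLoc.map_mk', RLoc.map_mk', IsLocalization.eq] at h
    obtain ⟨⟨c, hcR⟩, h⟩ := h
    obtain ⟨k, hik, c, hcA, rfl⟩ := hc.exists_lift_mem_RSigma i hcR
    have hk : (c * (Q₂.1.map (f i k hik) * p₁.map (f i k hik))).map (g k : A k →+* R)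
        = (c * (Q₁.1.map (f i k hik) * p₂.map (f i k hik))).map (g k : A k →+* R) := by
      simpa only [Polynomial.map_mul, hP.map_comp] using h
    obtain ⟨l, hkl, _, hl⟩ := hP.exists_map_eq k k _ _ hk
    refine ⟨l, hik.trans hkl, ?_⟩
    rw [RLoc.map_mk', RLoc.map_mk', IsLocalization.eq]
    refine ⟨⟨c.map (f k l hkl), RSigma.map_mem _ hcA⟩, ?_⟩
    simpa only [Polynomial.map_mul, hP.map_map] using hl

end IsDirectedColimit

theorem SetValuedFunctor.map_map (F : SetValuedFunctor B) {C D E : Type u} [CommRing C]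
    [Algebra B C] [CommRing D] [Algebra B D] [CommRing E] [Algebra B E]
    (φ : C →ₐ[B] D) (ψ : D →ₐ[B] E) (x : F.obj C) :
    F.map ψ (F.map φ x) = F.map (ψ.comp φ) x :=
  (congrFun (F.map_comp φ ψ) x).symm

theorem SetValuedFunctor.isDirectedColimit_map (F : SetValuedFunctor B) {ι : Type*} [Preorder ι]
    {A : ι → Type u} [∀ i, CommRing (A i)] [∀ i, Algebra B (A i)] {R : Type u} [CommRing R]
    [Algebra B R] {f : ∀ i j, i ≤ j → A i →ₐ[B] A j} {g : ∀ i, A i →ₐ[B] R}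
    (hc : IsDirectedColimit (fun i j h => ⇑(f i j h)) (fun i => ⇑(g i)))
    (hsurj : ∀ z : F.obj R, ∃ (i : ι) (x : F.obj (A i)), F.map (g i) x = z)
    (hexact : ∀ (i j : ι) (x : F.obj (A i)) (y : F.obj (A j)), F.map (g i) x = F.map (g j) y →
      ∃ (l : ι) (hil : i ≤ l) (hjl : j ≤ l), F.map (f i l hil) x = F.map (f j l hjl) y) :
    IsDirectedColimit (fun i j h => F.map (f i j h)) (fun i => F.map (g i)) where
  map_map i j k hij hjk x := by rw [F.map_map, hc.algHom_comp_map]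
  map_comp i j hij x := by rw [F.map_map, hc.algHom_comp]
  exists_eq := hsurj
  exists_map_eq := hexact

theorem DirectR.map {F : SetValuedFunctor B} {C D : Type u} [CommRing C] [Algebra B C]
    [CommRing D] [Algebra B D] (φ : C →ₐ[B] D) {a b : F.obj C} (h : DirectR B F C a b) :
    DirectR B F D (F.map φ a) (F.map φ b) := by
  obtain ⟨w, rfl, rfl⟩ := h
  exact ⟨F.map (RLoc.map φ) w, by rw [F.map_map, ev0R_comp_map, F.map_map],
    by rw [F.map_map, ev1R_comp_map, F.map_map]⟩

theorem exists_directR_map_of_directR {F : SetValuedFunctor B} {ι : Type*} [Preorder ι]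
    [IsDirected ι (· ≤ ·)] {A : ι → Type u} [∀ i, CommRing (A i)] [∀ i, Algebra B (A i)]
    {R : Type u} [CommRing R] [Algebra B R] {f : ∀ i j, i ≤ j → A i →ₐ[B] A j}
    {g : ∀ i, A i →ₐ[B] R}
    (hF : IsDirectedColimit (fun i j h => F.map (f i j h)) (fun i => F.map (g i)))
    (hFR : ∀ w : F.obj (RLoc R), ∃ (k : ι) (w' : F.obj (RLoc (A k))),
      F.map (RLoc.map (g k)) w' = w)
    {i j : ι} {x : F.obj (A i)} {x' : F.obj (A j)}
    (h : DirectR B F R (F.map (g i) x) (F.map (g j) x')) :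
    ∃ (k : ι) (hik : i ≤ k) (hjk : j ≤ k),
      DirectR B F (A k) (F.map (f i k hik) x) (F.map (f j k hjk) x') := by
  obtain ⟨w, h₀, h₁⟩ := h
  obtain ⟨k, w, rfl⟩ := hFR w
  rw [F.map_map, ev0R_comp_map, ← F.map_map] at h₀
  rw [F.map_map, ev1R_comp_map, ← F.map_map] at h₁
  obtain ⟨l₀, hkl₀, hil₀, H₀⟩ := hF.exists_map_eq k i _ x h₀
  obtain ⟨l₁, hkl₁, hjl₁, H₁⟩ := hF.exists_map_eq k j _ x' h₁
  obtain ⟨l, hl₀, hl₁⟩ := directed_of (· ≤ ·) l₀ l₁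
  refine ⟨l, hil₀.trans hl₀, hjl₁.trans hl₁, ?_⟩
  rw [← hF.map_map _ _ _ hil₀ hl₀, ← H₀, hF.map_map, ← hF.map_map _ _ _ hjl₁ hl₁, ← H₁,
    hF.map_map]
  exact DirectR.map (f k l (hkl₀.trans hl₀)) ⟨w, rfl, rfl⟩

theorem R_equivalence_classes_commute_with_filtered_colimits
    (B : Type u) [CommRing B] (F : SetValuedFunctor B)
    -- `F` is locally of finite presentation: it preserves filtered colimits of
    -- commutative `B`-algebras
    (hF : ∀ (ι : Type u) [Preorder ι] [IsDirected ι (· ≤ ·)] [Nonempty ι]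
        (A : ι → Type u) [∀ i, CommRing (A i)] [∀ i, Algebra B (A i)]
        (f : ∀ i j, i ≤ j → (A i →ₐ[B] A j))
        (_ : ∀ (i j l : ι) (hij : i ≤ j) (hjl : j ≤ l),
          (f j l hjl).comp (f i j hij) = f i l (hij.trans hjl))
        (Ainf : Type u) [CommRing Ainf] [Algebra B Ainf]
        (g : ∀ i, A i →ₐ[B] Ainf)
        (_ : ∀ (i j : ι) (hij : i ≤ j), (g j).comp (f i j hij) = g i)
        (_ : ∀ z : Ainf, ∃ (i : ι) (a : A i), g i a = z)
        (_ : ∀ (i j : ι) (a : A i) (b : A j), g i a = g j b →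
          ∃ (l : ι) (hil : i ≤ l) (hjl : j ≤ l), f i l hil a = f j l hjl b),
        (∀ z : F.obj Ainf, ∃ (i : ι) (x : F.obj (A i)), F.map (g i) x = z) ∧
        (∀ (i j : ι) (x : F.obj (A i)) (y : F.obj (A j)),
          F.map (g i) x = F.map (g j) y →
          ∃ (l : ι) (hil : i ≤ l) (hjl : j ≤ l),
            F.map (f i l hil) x = F.map (f j l hjl) y))
    -- a filtered direct limit `B_∞ = colim_λ B_λ` of commutative `B`-algebras
    (ι : Type u) [Preorder ι] [IsDirected ι (· ≤ ·)] [Nonempty ι]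
    (A : ι → Type u) [∀ i, CommRing (A i)] [∀ i, Algebra B (A i)]
    (f : ∀ i j, i ≤ j → (A i →ₐ[B] A j))
    (hf : ∀ (i j l : ι) (hij : i ≤ j) (hjl : j ≤ l),
      (f j l hjl).comp (f i j hij) = f i l (hij.trans hjl))
    (Ainf : Type u) [CommRing Ainf] [Algebra B Ainf]
    (g : ∀ i, A i →ₐ[B] Ainf)
    (hg : ∀ (i j : ι) (hij : i ≤ j), (g j).comp (f i j hij) = g i)
    (hsurj : ∀ z : Ainf, ∃ (i : ι) (a : A i), g i a = z)
    (hexact : ∀ (i j : ι) (a : A i) (b : A j), g i a = g j b →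
      ∃ (l : ι) (hil : i ≤ l) (hjl : j ≤ l), f i l hil a = f j l hjl b) :
    -- the natural map `colim_λ (F(B_λ)/R) → F(B_∞)/R` is bijective:
    -- surjectivity
    ((∀ z : F.obj Ainf, ∃ (i : ι) (x : F.obj (A i)),
        REquiv B F Ainf (F.map (g i) x) z) ∧
    -- injectivity
    (∀ (i j : ι) (x : F.obj (A i)) (y : F.obj (A j)),
        REquiv B F Ainf (F.map (g i) x) (F.map (g j) y) →
        ∃ (l : ι) (hil : i ≤ l) (hjl : j ≤ l),
          REquiv B F (A l) (F.map (f i l hil) x) (F.map (f j l hjl) y))) := by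
  have hA : IsDirectedColimit (fun i j h => ⇑(f i j h)) (fun i => ⇑(g i)) :=
    ⟨fun i j k hij hjk => AlgHom.congr_fun (hf i j k hij hjk),
      fun i j hij => AlgHom.congr_fun (hg i j hij), hsurj, hexact⟩
  have hR := hA.rLoc_map
  obtain ⟨hFsurj, hFexact⟩ := hF ι A f hf Ainf g hg hsurj hexact
  have hFA := F.isDirectedColimit_map hA hFsurj hFexact
  have hFR := (hF ι (fun i => RLoc (A i)) (fun i j h => RLoc.map (f i j h)) hR.algHom_comp_map
    (RLoc Ainf) (fun i => RLoc.map (g i)) hR.algHom_comp hR.exists_eq hR.exists_map_eq).1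
  refine ⟨fun z => ?_, fun i j x y h => hFA.eqvGen_lift (fun _ _ h _ _ => DirectR.map (f _ _ h))
    (fun _ _ _ _ => exists_directR_map_of_directR hFA hFR) h⟩
  obtain ⟨i, x, rfl⟩ := hFsurj z
  exact ⟨i, x, .refl _⟩
end
end

section
/- Let B be a semilocal commutative ring (a ring with only finitely many maximal ideals), let X be a scheme over Spec B, let U be an open subscheme of X, and let x₀, x₁ ∈ X(B) be points that factor through U. If x₀ and x₁ are directly R-equivalent in X(B), i.e. there exists a morphism x : Spec(B[t]_Σ) → X over Spec B with x ∘ Spec(ev₀) = x₀ and x ∘ Spec(ev₁) = x₁, then x factors through U; in particular x₀ and x₁ are directly R-equivalent in U(B). -/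
noncomputable section

open Polynomial

open AlgebraicGeometry CategoryTheory

universe u

/-!
An element of `B[t]_Σ` whose values at `0` and `1` are units is a unit, so
`ker ev₀ ∩ ker ev₁` lies in the Jacobson radical of `B[t]_Σ`. Hence every maximal ideal of
`B[t]_Σ` contains `ker ev₀` or `ker ev₁`: every closed point of `Spec B[t]_Σ` lies on one of
the two sections `Spec ev₀`, `Spec ev₁`, which `x` sends into `U`. Every point of an affine
scheme generizes to a closed point, and the open set `U` is stable under generization, so `x`
maps all of `Spec B[t]_Σ` into `U`.
-/

section RLoc

variable {B : Type*} [CommRing B]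

lemma ev0_algebraMap (p : B[X]) : ev0 B (algebraMap B[X] (RLoc B) p) = p.eval 0 := by
  simp [ev0, IsLocalization.liftAlgHom_apply, IsLocalization.lift_eq]

lemma ev1_algebraMap (p : B[X]) : ev1 B (algebraMap B[X] (RLoc B) p) = p.eval 1 := by
  simp [ev1, IsLocalization.liftAlgHom_apply, IsLocalization.lift_eq]

lemma ev0_surjective : Function.Surjective (ev0 B) :=
  fun b => ⟨algebraMap B (RLoc B) b, (ev0 B).commutes b⟩

lemma ev1_surjective : Function.Surjective (ev1 B) :=
  fun b => ⟨algebraMap B (RLoc B) b, (ev1 B).commutes b⟩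

lemma isUnit_of_isUnit_ev0_of_isUnit_ev1 {z : RLoc B}
    (h0 : IsUnit (ev0 B z)) (h1 : IsUnit (ev1 B z)) : IsUnit z := by
  obtain ⟨⟨p, s⟩, rfl⟩ := IsLocalization.mk'_surjective (RSigma B) z
  have hs := mem_RSigma.mp s.2
  have hspec : IsLocalization.mk' (RLoc B) p s * algebraMap B[X] (RLoc B) s =
      algebraMap B[X] (RLoc B) p := IsLocalization.mk'_spec _ p s
  have hp : p ∈ RSigma B := by
    constructor
    · rw [← ev0_algebraMap, ← hspec, map_mul, ev0_algebraMap]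
      exact h0.mul hs.1
    · rw [← ev1_algebraMap, ← hspec, map_mul, ev1_algebraMap]
      exact h1.mul hs.2
  exact isUnit_of_mul_isUnit_left (hspec ▸ IsLocalization.map_units (RLoc B) ⟨p, hp⟩)

lemma ker_ev0_inf_ker_ev1_le_jacobson :
    RingHom.ker (ev0 B) ⊓ RingHom.ker (ev1 B) ≤ Ring.jacobson (RLoc B) := by
  rintro z ⟨hz0, hz1⟩
  rw [← Ideal.jacobson_bot, Ideal.mem_jacobson_bot]
  intro y
  apply isUnit_of_isUnit_ev0_of_isUnit_ev1 <;>
    simp [RingHom.mem_ker.mp hz0, RingHom.mem_ker.mp hz1]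

lemma ker_ev0_le_or_ker_ev1_le (M : Ideal (RLoc B)) [M.IsMaximal] :
    RingHom.ker (ev0 B) ≤ M ∨ RingHom.ker (ev1 B) ≤ M :=
  (Ideal.IsPrime.mul_le inferInstance).mp <|
    Ideal.mul_le_inf.trans <| ker_ev0_inf_ker_ev1_le_jacobson.trans <|
      Ring.jacobson_le_of_isMaximal M

end RLoc

section Scheme

variable {R : Type u} [CommRing R] {X : Scheme.{u}} (g : Spec (CommRingCat.of R) ⟶ X)
  (U : X.Opens)

lemma Spec_range_subset_of_forall_isMaximal
    (h : ∀ M : PrimeSpectrum R, M.asIdeal.IsMaximal → g M ∈ U) : Set.range g ⊆ U := by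
  rintro _ ⟨P, rfl⟩
  obtain ⟨M, hM, hPM⟩ := P.asIdeal.exists_le_maximal P.isPrime.ne_top
  have hspec : P ⤳ ⟨M, hM.isPrime⟩ := (PrimeSpectrum.le_iff_specializes _ _).mp hPM
  exact (hspec.map g.continuous).mem_open U.2 (h _ hM)

lemma Spec_apply_mem_of_ker_le {S : Type u} [CommRing S] {φ : R →+* S}
    (hφ : Function.Surjective φ) (v : Spec (CommRingCat.of S) ⟶ U)
    (hv : Spec.map (CommRingCat.ofHom φ) ≫ g = v ≫ U.ι)
    (M : PrimeSpectrum R) (hM : RingHom.ker φ ≤ M.asIdeal) : g M ∈ U := by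
  obtain ⟨q, rfl⟩ : M ∈ Set.range (PrimeSpectrum.comap φ) := by
    rwa [range_comap_of_surjective _ _ hφ]
  have hgq : g (PrimeSpectrum.comap φ q) = U.ι (v q) :=
    congrArg (fun h : Spec (CommRingCat.of S) ⟶ X => h q) hv
  exact hgq ▸ (v q).2

end Scheme

theorem direct_R_equivalence_factors_through_open_subscheme_of_semilocal_general
    (B : Type u) [CommRing B]
    (X : Scheme.{u}) (U : X.Opens)
    -- the points `x₀, x₁ ∈ X(B)` ...
    (x₀ x₁ : Spec (CommRingCat.of B) ⟶ X)
    -- ... factor through `U`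
    (u₀ u₁ : Spec (CommRingCat.of B) ⟶ (U : Scheme.{u}))
    (hu₀ : u₀ ≫ U.ι = x₀) (hu₁ : u₁ ≫ U.ι = x₁)
    -- a direct R-equivalence between `x₀` and `x₁` in `X(B)`
    (x : Spec (CommRingCat.of (RLoc B)) ⟶ X)
    (hev0 : Spec.map (CommRingCat.ofHom (ev0 B).toRingHom) ≫ x = x₀)
    (hev1 : Spec.map (CommRingCat.ofHom (ev1 B).toRingHom) ≫ x = x₁) :
    -- `x` factors through `U`, giving a direct R-equivalence between `u₀` and `u₁` in `U(B)`
    ∃ u : Spec (CommRingCat.of (RLoc B)) ⟶ (U : Scheme.{u}),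
      u ≫ U.ι = x ∧
      Spec.map (CommRingCat.ofHom (ev0 B).toRingHom) ≫ u = u₀ ∧
      Spec.map (CommRingCat.ofHom (ev1 B).toRingHom) ≫ u = u₁ := by
  have hrange : Set.range x ⊆ Set.range U.ι := by
    rw [Scheme.Opens.range_ι]
    refine Spec_range_subset_of_forall_isMaximal x U fun M hM => ?_
    rcases ker_ev0_le_or_ker_ev1_le M.asIdeal with h | h
    · exact Spec_apply_mem_of_ker_le x U ev0_surjective u₀ (hev0.trans hu₀.symm) M h
    · exact Spec_apply_mem_of_ker_le x U ev1_surjective u₁ (hev1.trans hu₁.symm) M h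
  refine ⟨IsOpenImmersion.lift U.ι x hrange, IsOpenImmersion.lift_fac U.ι x hrange, ?_, ?_⟩
  · rw [← cancel_mono U.ι, Category.assoc, IsOpenImmersion.lift_fac, hev0, hu₀]
  · rw [← cancel_mono U.ι, Category.assoc, IsOpenImmersion.lift_fac, hev1, hu₁]

theorem direct_R_equivalence_factors_through_open_subscheme_of_semilocal
    (B : Type u) [CommRing B] [Finite (MaximalSpectrum B)]
    (X : Scheme.{u}) (f : X ⟶ Spec (CommRingCat.of B)) (U : X.Opens)
    -- the points `x₀, x₁ ∈ X(B)` ...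
    (x₀ x₁ : Spec (CommRingCat.of B) ⟶ X)
    (hx₀ : x₀ ≫ f = 𝟙 (Spec (CommRingCat.of B)))
    (hx₁ : x₁ ≫ f = 𝟙 (Spec (CommRingCat.of B)))
    -- ... factor through `U`
    (u₀ u₁ : Spec (CommRingCat.of B) ⟶ (U : Scheme.{u}))
    (hu₀ : u₀ ≫ U.ι = x₀) (hu₁ : u₁ ≫ U.ι = x₁)
    -- a direct R-equivalence between `x₀` and `x₁` in `X(B)`
    (x : Spec (CommRingCat.of (RLoc B)) ⟶ X)
    (hover : x ≫ f = Spec.map (CommRingCat.ofHom (algebraMap B (RLoc B))))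
    (hev0 : Spec.map (CommRingCat.ofHom (ev0 B).toRingHom) ≫ x = x₀)
    (hev1 : Spec.map (CommRingCat.ofHom (ev1 B).toRingHom) ≫ x = x₁) :
    -- `x` factors through `U`, giving a direct R-equivalence between `u₀` and `u₁` in `U(B)`
    ∃ u : Spec (CommRingCat.of (RLoc B)) ⟶ (U : Scheme.{u}),
      u ≫ U.ι = x ∧
      Spec.map (CommRingCat.ofHom (ev0 B).toRingHom) ≫ u = u₀ ∧
      Spec.map (CommRingCat.ofHom (ev1 B).toRingHom) ≫ u = u₁ :=
  direct_R_equivalence_factors_through_open_subscheme_of_semilocal_general B X U x₀ x₁ u₀ u₁ hu₀ hu₁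
    x hev0 hev1
end
end
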